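/- arXiv:1701.00204 — 2 statements merged into one kernel-verified Lean document; each statement's English description precedes it below -/
import Mathlib

section
/- Let w ∈ S_n be vexillary with associated partition λ(w) of length r, and let f(w) = {(p_i, q_i) : i = 1,…,d} be a flagging set of w. Then λ_i = q_i - p_i + i for each i = 1,…,d (where λ_i = 0 for i > r). -/
/-!
Write `r = r_w(p_i, q_i)`, so that `p_i - r = i`, and walk along diagonals of the grid. From
`(x, y)` to `(x + 1, y + 1)` the rank `r_w` grows by `0` at a box of `D(w)`, by `2` at an
"antibox" and by `1` otherwise. Along the diagonal ending at `(p_i, q_i)` this forces at least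
`min(p_i, q_i) - r` boxes of `D(w)`, hence `λ_i ≥ q_i - r`. On the next diagonal up, vexillarity
says that no antibox precedes a box, so up to its last box the rank is determined by the number of
boxes; the flagging condition at the essential boxes bounds the rank from below and leaves at most
`min(p_i, q_i + 1) - r - 1` boxes, hence `λ_i ≤ q_i - r = q_i - p_i + i`.
-/

/-- The rank function `r_w(p,q) = #{ i ≤ p : w(i) ≤ q }` in 1-based coordinates. -/
def rk {n : ℕ} (w : Equiv.Perm (Fin n)) (p q : ℕ) : ℕ :=
  (Finset.univ.filter fun i : Fin n => (i : ℕ) < p ∧ ((w i : Fin n) : ℕ) < q).card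

/-- The essential set `Ess(w)` in 0-based coordinates. -/
def InEssentialSet {n : ℕ} (w : Equiv.Perm (Fin n)) (p q : Fin n) : Prop :=
  ∃ (hp : (p : ℕ) + 1 < n) (hq : (q : ℕ) + 1 < n),
    (q : ℕ) < ((w p : Fin n) : ℕ) ∧
    ((w ⟨(p : ℕ) + 1, hp⟩ : Fin n) : ℕ) ≤ (q : ℕ) ∧
    (p : ℕ) < ((w.symm q : Fin n) : ℕ) ∧
    ((w.symm ⟨(q : ℕ) + 1, hq⟩ : Fin n) : ℕ) ≤ (p : ℕ)

def youngDiagonalCard (lam : ℕ → ℕ) (n : ℕ) (k : ℤ) : ℕ :=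
  ((Finset.Icc 1 n).filter fun i : ℕ => 1 ≤ (i : ℤ) + k ∧ (i : ℤ) + k ≤ (lam i : ℤ)).card

/-- The rows `j ≤ n` meeting the diagonal of content `k` form an interval starting at
`max 1 (1 - k)`, so row `m` meets it iff the interval reaches `m`. -/
lemma add_le_iff_le_youngDiagonalCard {lam : ℕ → ℕ}
    (hmono : ∀ i j : ℕ, 1 ≤ i → i ≤ j → lam j ≤ lam i) {n m : ℕ} (k : ℤ) (hm : 1 ≤ m)
    (hmn : m ≤ n) :
    (m : ℤ) + k ≤ lam m ↔ (m : ℤ) - max 0 (-k) ≤ youngDiagonalCard lam n k := by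
  constructor
  · intro h
    have hsub : Finset.Icc (max 1 (1 - k).toNat) m ⊆
        (Finset.Icc 1 n).filter fun i : ℕ => 1 ≤ (i : ℤ) + k ∧ (i : ℤ) + k ≤ (lam i : ℤ) := by
      intro j hj
      rw [Finset.mem_Icc] at hj
      have := hmono j m (by omega) hj.2
      simp only [Finset.mem_filter, Finset.mem_Icc]
      omega
    have := Finset.card_le_card hsub
    rw [Nat.card_Icc] at this
    unfold youngDiagonalCard
    omega
  · intro h
    by_contra hlt
    have hsub : ((Finset.Icc 1 n).filter fun i : ℕ =>
        1 ≤ (i : ℤ) + k ∧ (i : ℤ) + k ≤ (lam i : ℤ)) ⊆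
          Finset.Icc (max 1 (1 - k).toNat) (m - 1) := by
      intro j hj
      simp only [Finset.mem_filter, Finset.mem_Icc] at hj ⊢
      have : j < m := by
        by_contra hjm
        have := hmono m j hm (by omega)
        omega
      omega
    have := Finset.card_le_card hsub
    rw [Nat.card_Icc] at this
    unfold youngDiagonalCard at h
    omega

namespace RotheDiagram

variable {n : ℕ} (w : Equiv.Perm (Fin n))

lemma symm_val_eq_iff {x y : ℕ} (hx : x < n) (hy : y < n) :
    ((w.symm ⟨y, hy⟩ : Fin n) : ℕ) = x ↔ ((w ⟨x, hx⟩ : Fin n) : ℕ) = y := by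
  simpa [Fin.ext_iff, eq_comm] using (Equiv.symm_apply_eq w (x := ⟨y, hy⟩) (y := ⟨x, hx⟩))

lemma rk_symm (x y : ℕ) : rk w.symm y x = rk w x y := by
  refine Finset.card_nbij' w.symm w ?_ ?_ ?_ ?_ <;> intro i <;> simp [and_comm]

lemma rk_succ_left {x : ℕ} (hx : x < n) (y : ℕ) :
    rk w (x + 1) y = rk w x y + if ((w ⟨x, hx⟩ : Fin n) : ℕ) < y then 1 else 0 := by
  simp only [rk, Finset.card_filter]
  rw [← Fintype.sum_ite_eq' (⟨x, hx⟩ : Fin n) (fun i => if ((w i : Fin n) : ℕ) < y then 1 else 0),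
    ← Finset.sum_add_distrib]
  refine Finset.sum_congr rfl fun i _ => ?_
  by_cases hi : (i : ℕ) = x
  · obtain rfl : i = ⟨x, hx⟩ := Fin.ext hi
    simp
  · rw [if_neg (show i ≠ ⟨x, hx⟩ from fun h => hi (by rw [h]))]
    split_ifs <;> omega

lemma rk_succ_right {y : ℕ} (hy : y < n) (x : ℕ) :
    rk w x (y + 1) = rk w x y + if ((w.symm ⟨y, hy⟩ : Fin n) : ℕ) < x then 1 else 0 := by
  rw [← rk_symm, rk_succ_left, rk_symm]

lemma rk_succ_right_le (x y : ℕ) : rk w x (y + 1) ≤ rk w x y + 1 := by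
  rcases lt_or_ge y n with hy | hy
  · rw [rk_succ_right w hy]; split_ifs <;> omega
  · refine (Finset.card_le_card ?_).trans (Nat.le_succ _)
    intro i
    simp only [Finset.mem_filter, Finset.mem_univ, true_and]
    omega

lemma rk_add_right_le (x y k : ℕ) : rk w x (y + k) ≤ rk w x y + k := by
  induction k with
  | zero => rfl
  | succ k ih => exact (rk_succ_right_le w x (y + k)).trans (by omega)

lemma rk_mono_left (y : ℕ) : Monotone fun x => rk w x y :=
  fun _ _ h => Finset.card_le_card fun i => by
    simp only [Finset.mem_filter, Finset.mem_univ, true_and]; omega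

lemma rk_le_right (x y : ℕ) : rk w x y ≤ y := by
  calc rk w x y ≤ rk w x 0 + y := by simpa using rk_add_right_le w x 0 y
    _ = y := by simp [rk]

lemma rk_succ_succ {x y : ℕ} (hx : x < n) (hy : y < n) :
    rk w (x + 1) (y + 1) = rk w x y + (if ((w.symm ⟨y, hy⟩ : Fin n) : ℕ) < x then 1 else 0)
      + if ((w ⟨x, hx⟩ : Fin n) : ℕ) < y + 1 then 1 else 0 := by
  rw [rk_succ_left, rk_succ_right]

def IsVexillary : Prop :=
  ¬ ∃ a b c d : Fin n, a < b ∧ b < c ∧ c < d ∧ w b < w a ∧ w a < w d ∧ w d < w c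

/-- `(x, y)` lies in the diagram `D(w)`, in 0-based coordinates. -/
def IsBox (x y : ℕ) : Prop :=
  ∃ (hx : x < n) (hy : y < n), y < ((w ⟨x, hx⟩ : Fin n) : ℕ) ∧ x < ((w.symm ⟨y, hy⟩ : Fin n) : ℕ)

/-- The rank `rk w` jumps by two from `(x, y)` to `(x + 1, y + 1)`. -/
def IsAntibox (x y : ℕ) : Prop :=
  ∃ (hx : x < n) (hy : y < n), ((w ⟨x, hx⟩ : Fin n) : ℕ) ≤ y ∧ ((w.symm ⟨y, hy⟩ : Fin n) : ℕ) < x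

instance (x y : ℕ) : Decidable (IsBox w x y) := by
  unfold IsBox; infer_instance

def diagBoxCount (a b t : ℕ) : ℕ :=
  ((Finset.range t).filter fun s => IsBox w (a + s) (b + s)).card

def rotheDiagonalCard (k : ℤ) : ℕ :=
  (Finset.univ.filter fun b : Fin n × Fin n =>
    ((b.2 : ℕ) < ((w b.1 : Fin n) : ℕ) ∧ (b.1 : ℕ) < ((w.symm b.2 : Fin n) : ℕ)) ∧
      (b.2 : ℤ) - (b.1 : ℤ) = k).card

variable {w}

lemma rk_succ_succ_of_isBox {x y : ℕ} (h : IsBox w x y) : rk w (x + 1) (y + 1) = rk w x y := by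
  obtain ⟨hx, hy, hyw, hxw⟩ := h
  rw [rk_succ_succ w hx hy, if_neg (by omega), if_neg (by omega), add_zero, add_zero]

lemma rk_succ_succ_of_not_isBox {x y : ℕ} (hx : x < n) (hy : y < n) (h : ¬ IsBox w x y) :
    rk w x y + 1 ≤ rk w (x + 1) (y + 1) := by
  have hne := (symm_val_eq_iff w hx hy).not
  simp only [IsBox, not_exists, not_and, not_lt] at h
  rw [rk_succ_succ w hx hy]
  split_ifs <;> grind

lemma rk_succ_succ_le_of_not_isAntibox {x y : ℕ} (hx : x < n) (hy : y < n)
    (h : ¬ IsAntibox w x y) : rk w (x + 1) (y + 1) ≤ rk w x y + 1 := by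
  simp only [IsAntibox, not_exists, not_and, not_lt] at h
  rw [rk_succ_succ w hx hy]
  split_ifs <;> grind

/-- The entries in positions `w⁻¹ y < x < x' < w⁻¹ y'` form a `2143` pattern. -/
lemma not_isBox_of_isAntibox (hvex : IsVexillary w) {x y x' y' : ℕ} (hx : x < x') (hy : y < y')
    (h : IsAntibox w x y) : ¬ IsBox w x' y' := by
  obtain ⟨hxn, hyn, hwx, hwy⟩ := h
  rintro ⟨hxn', hyn', hwx', hwy'⟩
  have hne := (symm_val_eq_iff w hxn hyn).not
  refine hvex ⟨w.symm ⟨y, hyn⟩, ⟨x, hxn⟩, ⟨x', hxn'⟩, w.symm ⟨y', hyn'⟩, ?_⟩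
  simp only [Fin.lt_def, Equiv.apply_symm_apply]
  omega

/-- Walk down or right inside `D(w)` until stuck; the rank does not change along the way. -/
lemma exists_inEssentialSet_of_isBox {x y : ℕ} (h : IsBox w x y) :
    ∃ e f : Fin n, x ≤ e ∧ y ≤ f ∧ InEssentialSet w e f ∧
      rk w ((e : ℕ) + 1) ((f : ℕ) + 1) = rk w x y := by
  obtain ⟨hx, hy, hyw, hxw⟩ := h
  have hx1 : x + 1 < n := by omega
  have hy1 : y + 1 < n := by omega
  by_cases hA : y < ((w ⟨x + 1, hx1⟩ : Fin n) : ℕ)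
  · have hne := (symm_val_eq_iff w hx1 hy).not
    obtain ⟨e, f, he, hf, hef, hrk⟩ :=
      exists_inEssentialSet_of_isBox (show IsBox w (x + 1) y from ⟨hx1, hy, hA, by omega⟩)
    refine ⟨e, f, by omega, hf, hef, ?_⟩
    rw [hrk, rk_succ_left w hx, if_neg (by omega), add_zero]
  by_cases hB : x < ((w.symm ⟨y + 1, hy1⟩ : Fin n) : ℕ)
  · have hne := (symm_val_eq_iff w hx hy1).not
    obtain ⟨e, f, he, hf, hef, hrk⟩ :=
      exists_inEssentialSet_of_isBox (show IsBox w x (y + 1) from ⟨hx, hy1, by omega, hB⟩)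
    refine ⟨e, f, he, by omega, hef, ?_⟩
    rw [hrk, rk_succ_right w hy, if_neg (by omega), add_zero]
  exact ⟨⟨x, hx⟩, ⟨y, hy⟩, le_rfl, le_rfl, ⟨hx1, hy1, hyw, not_lt.mp hA, hxw, not_lt.mp hB⟩,
    rk_succ_succ_of_isBox (show IsBox w x y from ⟨hx, hy, hyw, hxw⟩)⟩
termination_by 2 * n - x - y

lemma diagBoxCount_succ (a b t : ℕ) :
    diagBoxCount w a b (t + 1) =
      diagBoxCount w a b t + if IsBox w (a + t) (b + t) then 1 else 0 := by
  rw [diagBoxCount, diagBoxCount, Finset.card_filter, Finset.card_filter, Finset.sum_range_succ]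

lemma diagBoxCount_mono (a b : ℕ) : Monotone (diagBoxCount w a b) := fun _ _ h =>
  Finset.card_le_card (Finset.filter_subset_filter _ (Finset.range_subset_range.mpr h))

lemma rk_add_le_rk_add_diagBoxCount {a b t : ℕ} (ha : a + t ≤ n) (hb : b + t ≤ n) :
    rk w a b + t ≤ rk w (a + t) (b + t) + diagBoxCount w a b t := by
  induction t with
  | zero => simp
  | succ t ih =>
    rw [diagBoxCount_succ, ← add_assoc a, ← add_assoc b]
    by_cases hbox : IsBox w (a + t) (b + t)
    · rw [if_pos hbox, rk_succ_succ_of_isBox hbox]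
      omega
    · have := rk_succ_succ_of_not_isBox (by omega) (by omega) hbox
      rw [if_neg hbox]
      omega

lemma diagBoxCount_add_rk_eq {a b t : ℕ} (ha : a + t ≤ n) (hb : b + t ≤ n)
    (hanti : ∀ s < t, ¬ IsAntibox w (a + s) (b + s)) :
    diagBoxCount w a b t + rk w (a + t) (b + t) = rk w a b + t := by
  induction t with
  | zero => simp [diagBoxCount]
  | succ t ih =>
    have ih := ih (by omega) (by omega) fun s hs => hanti s (by omega)
    rw [diagBoxCount_succ, ← add_assoc a, ← add_assoc b]
    by_cases hbox : IsBox w (a + t) (b + t)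
    · rw [if_pos hbox, rk_succ_succ_of_isBox hbox]
      omega
    · have := rk_succ_succ_of_not_isBox (by omega) (by omega) hbox
      have := rk_succ_succ_le_of_not_isAntibox (by omega) (by omega) (hanti t (by omega))
      rw [if_neg hbox]
      omega

/-- On a diagonal of a vexillary permutation no antibox precedes a box, so up to the last box
the rank grows exactly once per point that is not a box. -/
lemma diagBoxCount_le (hvex : IsVexillary w) {a b m B : ℕ} (ha : a + m ≤ n) (hb : b + m ≤ n)
    (hB : ∀ t ≤ m, rk w a b + t ≤ rk w (a + t) (b + t) + B) :
    diagBoxCount w a b m ≤ B := by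
  induction m with
  | zero => simp [diagBoxCount]
  | succ m ih =>
    rw [diagBoxCount_succ]
    by_cases hbox : IsBox w (a + m) (b + m)
    · have hanti : ∀ s < m, ¬ IsAntibox w (a + s) (b + s) := fun s hs h =>
        not_isBox_of_isAntibox hvex (by omega) (by omega) h hbox
      have heq := diagBoxCount_add_rk_eq (by omega) (by omega) hanti
      have hstep := rk_succ_succ_of_isBox hbox
      have hBm := hB (m + 1) le_rfl
      rw [← add_assoc a, ← add_assoc b] at hBm
      rw [if_pos hbox]
      omega
    · rw [if_neg hbox, add_zero]
      exact ih (by omega) (by omega) fun t ht => hB t (by omega)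

lemma diagBoxCount_eq_rotheDiagonalCard {a b : ℕ} (hab : a = 0 ∨ b = 0) :
    diagBoxCount w a b (n - max a b) = rotheDiagonalCard w (b - a) := by
  have hlt {s : ℕ} (hs : s ∈ (Finset.range (n - max a b)).filter fun s => IsBox w (a + s) (b + s)) :
      a + s < n ∧ b + s < n := by
    have := Finset.mem_range.mp (Finset.mem_filter.mp hs).1
    omega
  refine Finset.card_bij (fun s hs => (⟨a + s, (hlt hs).1⟩, ⟨b + s, (hlt hs).2⟩)) ?_ ?_ ?_
  · intro s hs
    obtain ⟨_, _, hyw, hxw⟩ := (Finset.mem_filter.mp hs).2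
    simp only [Finset.mem_filter, Finset.mem_univ, true_and]
    exact ⟨⟨hyw, hxw⟩, by push_cast; ring⟩
  · intro s _ t _ hst
    have := congrArg (fun z : Fin n × Fin n => (z.1 : ℕ)) hst
    simp only at this
    omega
  · rintro ⟨x, y⟩ hxy
    simp only [Finset.mem_filter, Finset.mem_univ, true_and] at hxy
    obtain ⟨⟨hyw, hxw⟩, hk⟩ := hxy
    have hx : (x : ℕ) = a + (x - a) := by omega
    have hy : (y : ℕ) = b + (x - a) := by omega
    refine ⟨x - a, Finset.mem_filter.mpr ⟨Finset.mem_range.mpr (by omega), ?_⟩, ?_⟩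
    · rw [← hx, ← hy]
      exact ⟨x.isLt, y.isLt, hyw, hxw⟩
    · simp only [← hx, ← hy]

lemma min_le_rk_add_rotheDiagonalCard {P Q : ℕ} (hP : P ≤ n) (hQ : Q ≤ n) :
    min P Q ≤ rk w P Q + rotheDiagonalCard w (Q - P) := by
  have hwalk := rk_add_le_rk_add_diagBoxCount (w := w) (a := P - Q) (b := Q - P) (t := min P Q)
    (by omega) (by omega)
  have hmono := diagBoxCount_mono (w := w) (P - Q) (Q - P)
    (show min P Q ≤ n - max (P - Q) (Q - P) by omega)
  rw [diagBoxCount_eq_rotheDiagonalCard (by omega), show ((Q - P : ℕ) : ℤ) - (P - Q : ℕ) = Q - P by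
    omega] at hmono
  rw [show P - Q + min P Q = P by omega, show Q - P + min P Q = Q by omega] at hwalk
  omega

end RotheDiagram

open RotheDiagram

/-- Flagging sets in 1-based coordinates, indexed by `Fin d`: index `i` is the paper's `i + 1`. -/
def IsFlaggingSet {n d : ℕ} (w : Equiv.Perm (Fin n)) (p q : Fin d → ℕ) : Prop :=
  Monotone p ∧ Antitone q ∧
    (∀ a b : Fin n, InEssentialSet w a b → ∃ i : Fin d, p i = (a : ℕ) + 1 ∧ q i = (b : ℕ) + 1) ∧
    ∀ i : Fin d, (p i : ℤ) - rk w (p i) (q i) = (i : ℤ) + 1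

namespace IsFlaggingSet

variable {n d : ℕ} {w : Equiv.Perm (Fin n)} {p q : Fin d → ℕ}

lemma rk_add_eq (hF : IsFlaggingSet w p q) (i : Fin d) : rk w (p i) (q i) + (i + 1) = p i := by
  have := hF.2.2.2 i
  omega

/-- Along the diagonal just above `(p i, q i)`, `x - r_w(x, y)` grows only across points that are
not boxes. A box where it would exceed `i` lies below an essential box of the same rank, whose index
`j ≥ i` in the flagging set makes `r_w(p i, q i)` too small. -/
lemma le_rk_add (hF : IsFlaggingSet w p q) (i : Fin d) {x y : ℕ} (hx : x ≤ n) (hy : y ≤ n)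
    (hxy : y + p i = x + q i + 1) : x ≤ rk w x y + i := by
  have ⟨hp, hq, hess, _⟩ := hF
  have hi := hF.rk_add_eq i
  have hRQ := rk_le_right w (p i) (q i)
  induction x generalizing y with
  | zero => omega
  | succ x ih =>
    obtain _ | y := y
    · rw [show rk w (x + 1) 0 = 0 by simp [rk]]
      omega
    have ih := ih (y := y) (by omega) (by omega) (by omega)
    by_cases hbox : IsBox w x y
    · by_contra hlt
      rw [rk_succ_succ_of_isBox hbox] at hlt
      obtain ⟨e, f, hxe, hyf, hef, hrk⟩ := exists_inEssentialSet_of_isBox hbox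
      obtain ⟨j, hpj, hqj⟩ := hess e f hef
      have hj := hF.rk_add_eq j
      rw [hpj, hqj, hrk] at hj
      have hij : i ≤ j := Fin.le_def.mpr (by omega)
      have hqji : q j ≤ q i := hq hij
      have hR : rk w (p i) (q i) ≤ rk w (p j) (q j) + (q i - q j) := calc
        rk w (p i) (q i) ≤ rk w (p i) (q j) + (q i - q j) := by
          simpa [Nat.add_sub_cancel' hqji] using rk_add_right_le w (p i) (q j) (q i - q j)
        _ ≤ rk w (p j) (q j) + (q i - q j) := by gcongr; exact rk_mono_left w _ (hp hij)
      rw [hpj, hqj, hrk] at hR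
      rw [hqj] at hqji
      omega
    · have := rk_succ_succ_of_not_isBox (by omega) (by omega) hbox
      omega

lemma rotheDiagonalCard_add_rk_lt (hvex : IsVexillary w) (hF : IsFlaggingSet w p q) (i : Fin d)
    (hP : p i ≤ n) (hQ : q i ≤ n) :
    rotheDiagonalCard w ((q i : ℤ) + 1 - p i) + rk w (p i) (q i) < min (p i) (q i + 1) := by
  have hi := hF.rk_add_eq i
  have hRQ := rk_le_right w (p i) (q i)
  set a := p i - (q i + 1)
  set b := q i + 1 - p i
  have hab : a = 0 ∨ b = 0 := by omega
  have hcount := diagBoxCount_le hvex (a := a) (b := b) (m := n - max a b)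
    (B := min (p i) (q i + 1) - rk w (p i) (q i) - 1) (by omega) (by omega) fun t _ => by
      rw [show rk w a b = 0 by rcases hab with h | h <;> simp [h, rk]]
      have := hF.le_rk_add i (x := a + t) (y := b + t) (by omega) (by omega) (by omega)
      omega
  rw [diagBoxCount_eq_rotheDiagonalCard hab, show (b : ℤ) - a = (q i : ℤ) + 1 - p i by omega]
    at hcount
  omega

end IsFlaggingSet

theorem flagging_set_gives_partition_general {n d : ℕ} (w : Equiv.Perm (Fin n))
    (hvex : ¬ ∃ a b c d : Fin n, a < b ∧ b < c ∧ c < d ∧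
        w b < w a ∧ w a < w d ∧ w d < w c)
    (lam : ℕ → ℕ)
    (hmono : ∀ i j : ℕ, 1 ≤ i → i ≤ j → lam j ≤ lam i)
    (hdiag : ∀ k : ℤ,
      (((Finset.Icc 1 n).filter fun i : ℕ =>
          1 ≤ (i : ℤ) + k ∧ (i : ℤ) + k ≤ (lam i : ℤ)).card) =
      ((Finset.univ.filter fun b : Fin n × Fin n =>
          ((b.2 : ℕ) < ((w b.1 : Fin n) : ℕ) ∧
            (b.1 : ℕ) < ((w.symm b.2 : Fin n) : ℕ)) ∧
          (b.2 : ℤ) - (b.1 : ℤ) = k).card))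
    (p q : Fin d → ℕ)
    (hrange : ∀ i, 1 ≤ p i ∧ p i ≤ n ∧ 1 ≤ q i ∧ q i ≤ n)
    (hp : Monotone p) (hq : Antitone q)
    (hess : ∀ a b : Fin n, InEssentialSet w a b →
      ∃ i : Fin d, p i = (a : ℕ) + 1 ∧ q i = (b : ℕ) + 1)
    (hflag : ∀ i : Fin d, (p i : ℤ) - rk w (p i) (q i) = (i : ℤ) + 1) :
    ∀ i : Fin d, (lam ((i : ℕ) + 1) : ℤ) = (q i : ℤ) - (p i : ℤ) + ((i : ℕ) + 1) := by
  intro i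
  have hF : IsFlaggingSet w p q := ⟨hp, hq, hess, hflag⟩
  have hcard : ∀ k, youngDiagonalCard lam n k = rotheDiagonalCard w k := hdiag
  obtain ⟨-, hP, -, hQ⟩ := hrange i
  have hi := hF.rk_add_eq i
  have hRQ := rk_le_right w (p i) (q i)
  have hlow := min_le_rk_add_rotheDiagonalCard (w := w) hP hQ
  have hup := hF.rotheDiagonalCard_add_rk_lt hvex i hP hQ
  rw [← hcard] at hlow hup
  have hge := (add_le_iff_le_youngDiagonalCard hmono ((q i : ℤ) - p i) (m := i + 1) (n := n)
    (by omega) (by omega)).mpr (by omega)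
  have hlt := (add_le_iff_le_youngDiagonalCard hmono ((q i : ℤ) + 1 - p i) (m := i + 1) (n := n)
    (by omega) (by omega)).not.mpr (by omega)
  push_cast at hge hlt
  omega

/-- if `w ∈ Sₙ` is vexillary, `λ = λ(w)` is its associated
partition (characterized by: the `k`-th diagonal of the Young diagram of `λ`
has as many boxes as the `k`-th diagonal of the diagram `D(w)`), and
`{(pᵢ, qᵢ)}_{i=1,…,d}` is a flagging set of `w`, then `λᵢ = qᵢ - pᵢ + i` for
`i = 1, …, d`.  Boxes are in 1-based paper coordinates, `λ` is indexed by
positive integers. -/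
theorem flagging_set_gives_partition {n d : ℕ} (w : Equiv.Perm (Fin n))
    (hvex : ¬ ∃ a b c d : Fin n, a < b ∧ b < c ∧ c < d ∧
        w b < w a ∧ w a < w d ∧ w d < w c)
    (lam : ℕ → ℕ)
    (hmono : ∀ i j : ℕ, 1 ≤ i → i ≤ j → lam j ≤ lam i)
    (hzero : ∀ i : ℕ, n < i → lam i = 0)
    (hdiag : ∀ k : ℤ,
      (((Finset.Icc 1 n).filter fun i : ℕ =>
          1 ≤ (i : ℤ) + k ∧ (i : ℤ) + k ≤ (lam i : ℤ)).card) =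
      ((Finset.univ.filter fun b : Fin n × Fin n =>
          ((b.2 : ℕ) < ((w b.1 : Fin n) : ℕ) ∧
            (b.1 : ℕ) < ((w.symm b.2 : Fin n) : ℕ)) ∧
          (b.2 : ℤ) - (b.1 : ℤ) = k).card))
    (p q : Fin d → ℕ)
    (hrange : ∀ i, 1 ≤ p i ∧ p i ≤ n ∧ 1 ≤ q i ∧ q i ≤ n)
    (hp : Monotone p) (hq : Antitone q)
    (hess : ∀ a b : Fin n, InEssentialSet w a b →
      ∃ i : Fin d, p i = (a : ℕ) + 1 ∧ q i = (b : ℕ) + 1)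
    (hflag : ∀ i : Fin d, (p i : ℤ) - rk w (p i) (q i) = (i : ℤ) + 1) :
    ∀ i : Fin d, (lam ((i : ℕ) + 1) : ℤ) = (q i : ℤ) - (p i : ℤ) + ((i : ℕ) + 1) :=
  flagging_set_gives_partition_general w hvex lam hmono hdiag p q hrange hp hq hess hflag
end

section
/- Let R be a commutative ring containing β, and suppose the Segre series of E - F is defined by S(E-F; u) = (1 + βu⁻¹)⁻¹ · c(E-F;β)/c(E-F;-u) as a formal Laurent series, where c(E-F;t) = c(E;t)/c(F;t). Then for every m ∈ ℤ, S_m(E-F) = (∑_{p=0}^{rk F} (-1)^p c_p(F) S_{m-p}(E)) · c(F;β)⁻¹, where S_m(E) are the coefficients of S(E;u) := (1+βu⁻¹)⁻¹ c(E;β)/c(E;-u). -/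
/-! Multiplying `S(E-F;u)` by `c(F;β) = c(F;uv)` cancels that factor of its denominator
and leaves `S(E;u)·c(F;-u)`. Taking the coefficient of `u^m` is `R[[β]]`-linear, and
multiplying by `β^j u^i` turns the coefficient of `u^m` into `β^j` times the coefficient of
`u^(m-i)`; hence `S_m(E-F)·c(F;β) = ∑_p (-1)^p c_p(F) S_{m-p}(E)`, and `c(F;β)` is
invertible since `c₀(F) = 1`. -/

namespace Segre

variable (R : Type*) [CommRing R]

/-- The ambient ring used to expand the Segre series
`S(E-F;u) = (1+βu⁻¹)⁻¹ c(E-F;β)/c(E-F;-u)`: since every negative power of `u`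
occurs together with a power of `β`, the series lies in `R[[v,u]]` where
`v = βu⁻¹` (so `β = uv`).  Here `v = X 0` and `u = X 1`. -/
noncomputable def v : MvPowerSeries (Fin 2) R := MvPowerSeries.X 0
noncomputable def u : MvPowerSeries (Fin 2) R := MvPowerSeries.X 1

/-- The Chern polynomial `c(E;t) = ∑_{i=0}^{e} cᵢ(E) tⁱ` evaluated at
`t : R[[v,u]]`. -/
noncomputable def cpoly (c : ℕ → R) (e : ℕ) (t : MvPowerSeries (Fin 2) R) :
    MvPowerSeries (Fin 2) R :=
  ∑ i ∈ Finset.range (e + 1), MvPowerSeries.C (σ := Fin 2) (R := R) (c i) * t ^ i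

/-- The full Segre series `S(E-F;u) = (1+βu⁻¹)⁻¹ c(E;β)c(F;-u)/(c(E;-u)c(F;β))`
as an element of `R[[v,u]]`, `β = uv`:  it is
`c(E;uv)·c(F;-u)·((1+v)·c(E;-u)·c(F;uv))⁻¹`. -/
noncomputable def segreSeries (cE : ℕ → R) (e : ℕ) (cF : ℕ → R) (f : ℕ) :
    MvPowerSeries (Fin 2) R :=
  (cpoly R cE e (u R * v R) * cpoly R cF f (-(u R))) *
    MvPowerSeries.invOfUnit
      ((1 + v R) * cpoly R cE e (-(u R)) * cpoly R cF f (u R * v R)) 1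

/-- The Segre class `S_m(E-F)`, the coefficient of `u^m` in `S(E-F;u)`; it is a
power series in `β`, whose `β^k`-coefficient is the `v^k u^{m+k}`-coefficient
of the expanded series. -/
noncomputable def segreClass (cE : ℕ → R) (e : ℕ) (cF : ℕ → R) (f : ℕ)
    (m : ℤ) : PowerSeries R :=
  PowerSeries.mk fun k =>
    if 0 ≤ m + (k : ℤ) then
      MvPowerSeries.coeff (R := R)
        (Finsupp.single (0 : Fin 2) k
          + Finsupp.single (1 : Fin 2) (m + (k : ℤ)).toNat)
        (segreSeries R cE e cF f)
    else 0

/-- `S_m(E)`, the Segre class of `E` alone (`F` trivial). -/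
noncomputable def segreClassE (cE : ℕ → R) (e : ℕ) (m : ℤ) : PowerSeries R :=
  segreClass R cE e (fun i => if i = 0 then 1 else 0) 0 m

/-- `c(F;β) = ∑_{j=0}^{f} cⱼ(F) βʲ` as a power series in `β`. -/
noncomputable def chernAtBeta (cF : ℕ → R) (f : ℕ) : PowerSeries R :=
  ∑ j ∈ Finset.range (f + 1), PowerSeries.C (R := R) (cF j) * PowerSeries.X ^ j

noncomputable def bideg (k n : ℕ) : Fin 2 →₀ ℕ := Finsupp.single 0 k + Finsupp.single 1 n

lemma bideg_le_bideg {j i k n : ℕ} : bideg j i ≤ bideg k n ↔ j ≤ k ∧ i ≤ n := by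
  simp only [bideg, Finsupp.le_def, Fin.forall_fin_two]
  simp

lemma bideg_tsub_bideg (j i k n : ℕ) : bideg k n - bideg j i = bideg (k - j) (n - i) := by
  ext a
  fin_cases a <;> simp [bideg]

/-- The coefficient of `u^m`, expanded in `β = uv`. -/
noncomputable def diagCoeff (m : ℤ) : MvPowerSeries (Fin 2) R →ₗ[R] PowerSeries R where
  toFun a := PowerSeries.mk fun k =>
    if 0 ≤ m + k then MvPowerSeries.coeff (bideg k (m + k).toNat) a else 0
  map_add' a b := by
    ext k
    simp only [PowerSeries.coeff_mk, map_add]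
    split_ifs <;> simp
  map_smul' c a := by
    ext k
    simp only [PowerSeries.coeff_mk, map_smul, RingHom.id_apply]
    split_ifs <;> simp

lemma coeff_diagCoeff (m : ℤ) (a : MvPowerSeries (Fin 2) R) (k : ℕ) :
    PowerSeries.coeff k (diagCoeff R m a) =
      if 0 ≤ m + k then MvPowerSeries.coeff (bideg k (m + k).toNat) a else 0 := by
  simp only [diagCoeff, LinearMap.coe_mk, AddHom.coe_mk, PowerSeries.coeff_mk]

lemma segreClass_eq_diagCoeff (cE : ℕ → R) (e : ℕ) (cF : ℕ → R) (f : ℕ) (m : ℤ) :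
    segreClass R cE e cF f m = diagCoeff R m (segreSeries R cE e cF f) :=
  rfl

lemma diagCoeff_mul_monomial (m : ℤ) (a : MvPowerSeries (Fin 2) R) (c : R) (j i : ℕ) :
    diagCoeff R m (a * MvPowerSeries.monomial (bideg j (j + i)) c) =
      PowerSeries.C c * PowerSeries.X ^ j * diagCoeff R (m - i) a := by
  ext k
  rw [mul_assoc, PowerSeries.coeff_C_mul, PowerSeries.coeff_X_pow_mul', coeff_diagCoeff,
    MvPowerSeries.coeff_mul_monomial]
  simp only [bideg_le_bideg, bideg_tsub_bideg]
  by_cases hjk : j ≤ k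
  · rw [if_pos hjk, coeff_diagCoeff]
    split_ifs <;> try first | omega | rw [mul_zero]
    rw [show (m + k).toNat - (j + i) = (m - i + (k - j : ℕ)).toNat by omega, mul_comm]
  · simp [hjk]

lemma C_mul_uv_pow (c : R) (j : ℕ) :
    MvPowerSeries.C c * (u R * v R) ^ j = MvPowerSeries.monomial (bideg j j) c := by
  rw [u, v, mul_pow, MvPowerSeries.X_pow_eq, MvPowerSeries.X_pow_eq,
    ← MvPowerSeries.monomial_zero_eq_C_apply, MvPowerSeries.monomial_mul_monomial,
    MvPowerSeries.monomial_mul_monomial, bideg, zero_add, add_comm, mul_one, mul_one]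

lemma C_mul_neg_u_pow (c : R) (j : ℕ) :
    MvPowerSeries.C c * (-u R) ^ j = MvPowerSeries.monomial (bideg 0 j) ((-1) ^ j * c) := by
  rw [neg_pow, u, MvPowerSeries.X_pow_eq, ← mul_assoc, ← map_one MvPowerSeries.C, ← map_neg,
    ← map_pow, ← map_mul, ← MvPowerSeries.monomial_zero_eq_C_apply,
    MvPowerSeries.monomial_mul_monomial, bideg, Finsupp.single_zero, zero_add, mul_one,
    mul_comm]

lemma diagCoeff_mul_cpoly_uv (m : ℤ) (a : MvPowerSeries (Fin 2) R) (c : ℕ → R) (f : ℕ) :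
    diagCoeff R m (a * cpoly R c f (u R * v R)) = diagCoeff R m a * chernAtBeta R c f := by
  simp only [cpoly, chernAtBeta, Finset.mul_sum, map_sum, C_mul_uv_pow]
  refine Finset.sum_congr rfl fun j _ => ?_
  rw [show bideg j j = bideg j (j + 0) from rfl, diagCoeff_mul_monomial, Nat.cast_zero,
    sub_zero, mul_comm]

lemma diagCoeff_mul_cpoly_neg_u (m : ℤ) (a : MvPowerSeries (Fin 2) R) (c : ℕ → R) (f : ℕ) :
    diagCoeff R m (a * cpoly R c f (-u R)) =
      ∑ p ∈ Finset.range (f + 1),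
        ((-1 : PowerSeries R) ^ p * PowerSeries.C (c p)) * diagCoeff R (m - p) a := by
  simp only [cpoly, Finset.mul_sum, map_sum, C_mul_neg_u_pow]
  refine Finset.sum_congr rfl fun p _ => ?_
  rw [show bideg 0 p = bideg 0 (0 + p) by rw [zero_add], diagCoeff_mul_monomial, pow_zero,
    mul_one, map_mul, map_pow, map_neg, map_one]

lemma _root_.MvPowerSeries.invOfUnit_mul_mul_cancel_right {σ A : Type*} [CommRing A]
    {φ ψ : MvPowerSeries σ A} (hφ : MvPowerSeries.constantCoeff φ = 1)
    (hψ : MvPowerSeries.constantCoeff ψ = 1) :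
    MvPowerSeries.invOfUnit (φ * ψ) 1 * ψ = MvPowerSeries.invOfUnit φ 1 :=
  left_inv_eq_right_inv
    (by rw [mul_assoc, mul_comm ψ, MvPowerSeries.invOfUnit_mul _ _ (by simp [hφ, hψ])])
    (MvPowerSeries.mul_invOfUnit _ _ (by simp [hφ]))

lemma constantCoeff_cpoly (c : ℕ → R) (e : ℕ) {t : MvPowerSeries (Fin 2) R}
    (ht : MvPowerSeries.constantCoeff t = 0) :
    MvPowerSeries.constantCoeff (cpoly R c e t) = c 0 := by
  simp [cpoly, map_sum, ht, Finset.sum_range_succ']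

lemma cpoly_trivial (t : MvPowerSeries (Fin 2) R) :
    cpoly R (fun i => if i = 0 then 1 else 0) 0 t = 1 := by
  simp [cpoly]

lemma segreSeries_mul_cpoly_uv (cE : ℕ → R) (e : ℕ) (cF : ℕ → R) (f : ℕ)
    (hcE0 : cE 0 = 1) (hcF0 : cF 0 = 1) :
    segreSeries R cE e cF f * cpoly R cF f (u R * v R) =
      segreSeries R cE e (fun i => if i = 0 then 1 else 0) 0 * cpoly R cF f (-u R) := by
  have hW : MvPowerSeries.constantCoeff ((1 + v R) * cpoly R cE e (-u R)) = 1 := by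
    simp [constantCoeff_cpoly R cE e (t := -u R) (by simp [u]), hcE0, v]
  have hG : MvPowerSeries.constantCoeff (cpoly R cF f (u R * v R)) = 1 := by
    rw [constantCoeff_cpoly R cF f (by simp [u, v]), hcF0]
  rw [segreSeries, segreSeries, cpoly_trivial, cpoly_trivial, mul_one, mul_one, mul_assoc,
    MvPowerSeries.invOfUnit_mul_mul_cancel_right hW hG]
  ring

lemma constantCoeff_chernAtBeta (c : ℕ → R) (f : ℕ) :
    PowerSeries.constantCoeff (chernAtBeta R c f) = c 0 := by
  simp [chernAtBeta, map_sum, Finset.sum_range_succ']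

/-- identity (2.2):
`S_m(E-F) = (∑_{p=0}^{rk F} (-1)^p c_p(F) S_{m-p}(E)) · c(F;β)⁻¹`
for all `m ∈ ℤ`, where the Chern classes of `E` and `F` are `cE` and `cF`
(with `c₀ = 1`) and all classes are expanded as power series in `β`. -/
theorem segre_relation_2_2 (cE : ℕ → R) (e : ℕ) (cF : ℕ → R) (f : ℕ)
    (hcE0 : cE 0 = 1) (hcF0 : cF 0 = 1) :
    ∀ m : ℤ,
      segreClass R cE e cF f m =
        (∑ p ∈ Finset.range (f + 1),
            ((-1 : PowerSeries R) ^ p * PowerSeries.C (R := R) (cF p))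
              * segreClassE R cE e (m - p)) *
          PowerSeries.invOfUnit (chernAtBeta R cF f) 1 := by
  intro m
  have hmul : segreClass R cE e cF f m * chernAtBeta R cF f =
      ∑ p ∈ Finset.range (f + 1),
        ((-1 : PowerSeries R) ^ p * PowerSeries.C (cF p)) * segreClassE R cE e (m - p) := by
    simp only [segreClassE, segreClass_eq_diagCoeff]
    simpa only [diagCoeff_mul_cpoly_uv, diagCoeff_mul_cpoly_neg_u] using
      congrArg (diagCoeff R m) (segreSeries_mul_cpoly_uv R cE e cF f hcE0 hcF0)
  have hinv : chernAtBeta R cF f * PowerSeries.invOfUnit (chernAtBeta R cF f) 1 = 1 :=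
    PowerSeries.mul_invOfUnit _ _ (by simp [constantCoeff_chernAtBeta, hcF0])
  rw [← hmul, mul_assoc, hinv, mul_one]

end Segre
end
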